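/- arXiv:2307.04328 — 4 statements merged into one kernel-verified Lean document; each statement's English description precedes it below -/
import Mathlib

section
/- The function g(S) = H(F_U) − H(F_U | F_S) on subsets of a finite set of conditionally independent sensor measurements (independent given F_U) is submodular: for S ⊆ T and any element z ∉ T, g(S ∪ {z}) − g(S) ≥ g(T ∪ {z}) − g(T). -/
open Finset

/-- Shannon entropy of a random variable `X` on a finite probability space with
probability mass function `p`. -/
noncomputable def shannonEntropy {Ω β : Type*} [Fintype Ω] [Fintype β] [DecidableEq β]
    (p : Ω → ℝ) (X : Ω → β) : ℝ :=
  ∑ b : β, Real.negMulLog (∑ ω ∈ Finset.univ.filter (fun ω => X ω = b), p ω)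

namespace MISub

variable {Ω : Type*} [Fintype Ω]

/-- Mass of an event. -/
noncomputable def pm (p : Ω → ℝ) (E : Ω → Prop) : ℝ :=
  ∑ ω : Ω, Set.indicator {ω | E ω} p ω

lemma pm_def (p : Ω → ℝ) (E : Ω → Prop) [DecidablePred E] :
    pm p E = ∑ ω ∈ Finset.univ.filter E, p ω := by
  rw [Finset.sum_filter]
  refine Finset.sum_congr rfl fun ω _ => ?_
  by_cases h : E ω
  · rw [Set.indicator_of_mem (show ω ∈ {ω | E ω} from h), if_pos h]
  · rw [Set.indicator_of_notMem (show ω ∉ {ω | E ω} from h), if_neg h]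

variable {p : Ω → ℝ}

lemma pm_nonneg (hp0 : ∀ ω, 0 ≤ p ω) (E : Ω → Prop) : 0 ≤ pm p E :=
  Finset.sum_nonneg fun ω _ => Set.indicator_nonneg (fun a _ => hp0 a) _

lemma pm_congr {E F : Ω → Prop} (h : ∀ ω, E ω ↔ F ω) : pm p E = pm p F := by
  have : E = F := funext fun ω => propext (h ω)
  rw [this]

lemma pm_mono (hp0 : ∀ ω, 0 ≤ p ω) {E F : Ω → Prop} (h : ∀ ω, E ω → F ω) :
    pm p E ≤ pm p F :=
  Finset.sum_le_sum fun ω _ =>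
    Set.indicator_le_indicator_of_subset (fun x hx => h x hx) (fun a => hp0 a) ω

lemma pm_false : pm p (fun _ => False) = 0 := by
  simp [pm]

lemma pm_fiber {β : Type*} [Fintype β] [DecidableEq β] (E : Ω → Prop) (Y : Ω → β) :
    pm p E = ∑ b : β, pm p (fun ω => E ω ∧ Y ω = b) := by
  classical
  rw [pm_def, ← Finset.sum_fiberwise (Finset.univ.filter E) Y p]
  refine Finset.sum_congr rfl fun b _ => ?_
  rw [pm_def, Finset.filter_filter]

lemma entropy_eq {β : Type*} [Fintype β] [DecidableEq β] (p : Ω → ℝ) (X : Ω → β) :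
    shannonEntropy p X = ∑ b : β, Real.negMulLog (pm p (fun ω => X ω = b)) := by
  unfold shannonEntropy
  exact Finset.sum_congr rfl fun b _ => by rw [pm_def]

lemma entropy_comp_inj {β γ : Type*} [Fintype β] [DecidableEq β] [Fintype γ] [DecidableEq γ]
    (p : Ω → ℝ) (X : Ω → β) (e : β → γ) (he : Function.Injective e) :
    shannonEntropy p (fun ω => e (X ω)) = shannonEntropy p X := by
  classical
  rw [entropy_eq, entropy_eq]
  have h1 : ∀ c ∈ Finset.univ, c ∉ Finset.univ.image e →
      Real.negMulLog (pm p fun ω => e (X ω) = c) = 0 := by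
    intro c _ hc
    have h2 : (pm p fun ω => e (X ω) = c) = pm p (fun _ => False) := by
      refine pm_congr fun ω => ⟨fun h => hc (Finset.mem_image.2 ⟨X ω, Finset.mem_univ _, h⟩),
        fun h => h.elim⟩
    rw [h2, pm_false, Real.negMulLog_zero]
  rw [← Finset.sum_subset (Finset.subset_univ (Finset.univ.image e)) h1,
    Finset.sum_image (fun x _ y _ h => he h)]
  refine Finset.sum_congr rfl fun b _ => ?_
  congr 1
  exact pm_congr fun ω => by simp [he.eq_iff]

/-- The log-sum inequality. -/
lemma logSum {ι : Type*} (t : Finset ι) (x y : ι → ℝ)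
    (hx : ∀ i ∈ t, 0 ≤ x i) (hxy : ∀ i ∈ t, x i ≤ y i) :
    (∑ i ∈ t, x i) * Real.log ((∑ i ∈ t, x i) / (∑ i ∈ t, y i)) ≤
      ∑ i ∈ t, x i * Real.log (x i / y i) := by
  set X := ∑ i ∈ t, x i with hX
  set Y := ∑ i ∈ t, y i with hY
  have hy : ∀ i ∈ t, 0 ≤ y i := fun i hi => (hx i hi).trans (hxy i hi)
  by_cases hY0 : Y = 0
  · have hyz : ∀ i ∈ t, y i = 0 := by
      intro i hi
      exact le_antisymm (hY0 ▸ Finset.single_le_sum hy hi) (hy i hi)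
    have hxz : ∀ i ∈ t, x i = 0 := fun i hi =>
      le_antisymm ((hyz i hi) ▸ hxy i hi) (hx i hi)
    have hX0 : X = 0 := by rw [hX]; exact Finset.sum_eq_zero hxz
    rw [hX0, zero_mul]
    refine le_of_eq (Finset.sum_eq_zero fun i hi => ?_).symm
    rw [hxz i hi, zero_mul]
  · have hYpos : 0 < Y := lt_of_le_of_ne (Finset.sum_nonneg hy) (Ne.symm hY0)
    have jensen := Real.convexOn_mul_log.map_centerMass_le (t := t) (w := y)
      (p := fun i => x i / y i) hy (hY ▸ hYpos)
      (fun i hi => Set.mem_Ici.2 (div_nonneg (hx i hi) (hy i hi)))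
    have hc1 : t.centerMass y (fun i => x i / y i) = X / Y := by
      rw [Finset.centerMass]
      have hs : ∑ i ∈ t, y i • (x i / y i) = X := by
        rw [hX]
        refine Finset.sum_congr rfl fun i hi => ?_
        by_cases h : y i = 0
        · have hx0 : x i = 0 := le_antisymm (h ▸ hxy i hi) (hx i hi)
          simp [h, hx0]
        · rw [smul_eq_mul, mul_div_cancel₀ _ h]
      rw [hs, smul_eq_mul, ← hY, inv_mul_eq_div]
    have hc2 : t.centerMass y ((fun z => z * Real.log z) ∘ fun i => x i / y i)
        = Y⁻¹ * ∑ i ∈ t, x i * Real.log (x i / y i) := by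
      rw [Finset.centerMass, smul_eq_mul, ← hY]
      congr 1
      refine Finset.sum_congr rfl fun i hi => ?_
      by_cases h : y i = 0
      · have hx0 : x i = 0 := le_antisymm (h ▸ hxy i hi) (hx i hi)
        simp [h, hx0]
      · rw [smul_eq_mul, Function.comp_apply]
        field_simp
    rw [hc1, hc2] at jensen
    have h2 := mul_le_mul_of_nonneg_left jensen hYpos.le
    calc X * Real.log (X / Y) = Y * (X / Y * Real.log (X / Y)) := by
          field_simp
      _ ≤ Y * (Y⁻¹ * ∑ i ∈ t, x i * Real.log (x i / y i)) := h2
      _ = ∑ i ∈ t, x i * Real.log (x i / y i) := by field_simp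

lemma condEntropy_repr {α γ : Type*} [Fintype α] [DecidableEq α] [Fintype γ] [DecidableEq γ]
    (hp0 : ∀ ω, 0 ≤ p ω) (A : Ω → α) (C : Ω → γ) :
    shannonEntropy p (fun ω => (A ω, C ω)) - shannonEntropy p C
      = -∑ a : α, ∑ c : γ, (pm p fun ω => A ω = a ∧ C ω = c) *
          Real.log ((pm p fun ω => A ω = a ∧ C ω = c) / (pm p fun ω => C ω = c)) := by
  classical
  have hAC : shannonEntropy p (fun ω => (A ω, C ω))
      = ∑ a : α, ∑ c : γ, Real.negMulLog (pm p fun ω => A ω = a ∧ C ω = c) := by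
    rw [entropy_eq, Fintype.sum_prod_type]
    exact Finset.sum_congr rfl fun a _ => Finset.sum_congr rfl fun c _ => by
      congr 1
      exact pm_congr fun ω => by simp [Prod.ext_iff]
  have hC : shannonEntropy p C = ∑ c : γ, Real.negMulLog (pm p fun ω => C ω = c) :=
    entropy_eq p C
  have hCsplit : ∀ c, (pm p fun ω => C ω = c) = ∑ a : α, pm p fun ω => A ω = a ∧ C ω = c := by
    intro c
    rw [pm_fiber (fun ω => C ω = c) A]
    exact Finset.sum_congr rfl fun a _ => pm_congr fun ω => and_comm
  have key : ∀ (a : α) (c : γ),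
      (pm p fun ω => A ω = a ∧ C ω = c) *
        Real.log ((pm p fun ω => A ω = a ∧ C ω = c) / (pm p fun ω => C ω = c))
      = (pm p fun ω => A ω = a ∧ C ω = c) * Real.log (pm p fun ω => A ω = a ∧ C ω = c)
        - (pm p fun ω => A ω = a ∧ C ω = c) * Real.log (pm p fun ω => C ω = c) := by
    intro a c
    rcases eq_or_lt_of_le (pm_nonneg hp0 (fun ω => A ω = a ∧ C ω = c)) with h | h
    · rw [← h]; ring
    · have hfc : 0 < pm p fun ω => C ω = c :=
        lt_of_lt_of_le h (pm_mono hp0 fun ω hw => hw.2)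
      rw [Real.log_div (ne_of_gt h) (ne_of_gt hfc)]
      ring
  have e2 : ∑ a : α, ∑ c : γ,
      (pm p fun ω => A ω = a ∧ C ω = c) * Real.log (pm p fun ω => C ω = c)
      = ∑ c : γ, (pm p fun ω => C ω = c) * Real.log (pm p fun ω => C ω = c) := by
    rw [Finset.sum_comm]
    refine Finset.sum_congr rfl fun c _ => ?_
    rw [← Finset.sum_mul, ← hCsplit c]
  have e3 : ∑ a : α, ∑ c : γ,
      (pm p fun ω => A ω = a ∧ C ω = c) *
        Real.log ((pm p fun ω => A ω = a ∧ C ω = c) / (pm p fun ω => C ω = c))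
      = (∑ a : α, ∑ c : γ, (pm p fun ω => A ω = a ∧ C ω = c) *
          Real.log (pm p fun ω => A ω = a ∧ C ω = c))
        - ∑ c : γ, (pm p fun ω => C ω = c) * Real.log (pm p fun ω => C ω = c) := by
    rw [← e2, ← Finset.sum_sub_distrib]
    refine Finset.sum_congr rfl fun a _ => ?_
    rw [← Finset.sum_sub_distrib]
    exact Finset.sum_congr rfl fun c _ => key a c
  rw [hAC, hC, e3]
  simp only [Real.negMulLog, neg_mul, Finset.sum_neg_distrib]
  ring

lemma cond_entropy_mono {α β γ : Type*} [Fintype α] [DecidableEq α] [Fintype β] [DecidableEq β]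
    [Fintype γ] [DecidableEq γ] (hp0 : ∀ ω, 0 ≤ p ω) (A : Ω → α) (C : Ω → γ) (φ : γ → β) :
    shannonEntropy p (fun ω => (A ω, C ω)) - shannonEntropy p C ≤
      shannonEntropy p (fun ω => (A ω, φ (C ω))) - shannonEntropy p (fun ω => φ (C ω)) := by
  classical
  rw [condEntropy_repr hp0 A C, condEntropy_repr hp0 A (fun ω => φ (C ω))]
  apply neg_le_neg
  have hFab : ∀ (a : α) (b : β), (pm p fun ω => A ω = a ∧ φ (C ω) = b)
      = ∑ c ∈ Finset.univ.filter (fun c => φ c = b), pm p fun ω => A ω = a ∧ C ω = c := by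
    intro a b
    rw [pm_fiber (fun ω => A ω = a ∧ φ (C ω) = b) C, Finset.sum_filter]
    refine Finset.sum_congr rfl fun c _ => ?_
    by_cases h : φ c = b
    · rw [if_pos h]
      exact pm_congr fun ω => ⟨fun hh => ⟨hh.1.1, hh.2⟩, fun hh => ⟨⟨hh.1, hh.2 ▸ h⟩, hh.2⟩⟩
    · rw [if_neg h, show (0:ℝ) = pm p (fun _ : Ω => False) from pm_false.symm]
      exact pm_congr fun ω => ⟨fun hh => h (hh.2 ▸ hh.1.2), False.elim⟩
  have hFb : ∀ b : β, (pm p fun ω => φ (C ω) = b)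
      = ∑ c ∈ Finset.univ.filter (fun c => φ c = b), pm p fun ω => C ω = c := by
    intro b
    rw [pm_fiber (fun ω => φ (C ω) = b) C, Finset.sum_filter]
    refine Finset.sum_congr rfl fun c _ => ?_
    by_cases h : φ c = b
    · rw [if_pos h]
      exact pm_congr fun ω => ⟨fun hh => hh.2, fun hh => ⟨hh ▸ h, hh⟩⟩
    · rw [if_neg h, show (0:ℝ) = pm p (fun _ : Ω => False) from pm_false.symm]
      exact pm_congr fun ω => ⟨fun hh => h (hh.2 ▸ hh.1), False.elim⟩
  refine Finset.sum_le_sum fun a _ => ?_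
  rw [← Finset.sum_fiberwise Finset.univ φ (fun c =>
    (pm p fun ω => A ω = a ∧ C ω = c) *
      Real.log ((pm p fun ω => A ω = a ∧ C ω = c) / (pm p fun ω => C ω = c)))]
  refine Finset.sum_le_sum fun b _ => ?_
  rw [hFab a b, hFb b]
  exact logSum _ _ _ (fun c _ => pm_nonneg hp0 _)
    (fun c _ => pm_mono hp0 fun ω hw => hw.2)

lemma chain_eq {α β γ : Type*} [Fintype α] [DecidableEq α] [Fintype β] [DecidableEq β]
    [Fintype γ] [DecidableEq γ] (hp0 : ∀ ω, 0 ≤ p ω) (A : Ω → α) (B : Ω → β) (C : Ω → γ)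
    (h : ∀ (a : α) (b : β) (c : γ),
      (pm p fun ω => A ω = a ∧ B ω = b ∧ C ω = c) * (pm p fun ω => A ω = a)
        = (pm p fun ω => A ω = a ∧ B ω = b) * (pm p fun ω => A ω = a ∧ C ω = c)) :
    shannonEntropy p (fun ω => (A ω, B ω, C ω)) + shannonEntropy p A
      = shannonEntropy p (fun ω => (A ω, B ω)) + shannonEntropy p (fun ω => (A ω, C ω)) := by
  classical
  have hABC : shannonEntropy p (fun ω => (A ω, B ω, C ω))
      = ∑ a : α, ∑ b : β, ∑ c : γ,
          Real.negMulLog (pm p fun ω => A ω = a ∧ B ω = b ∧ C ω = c) := by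
    rw [entropy_eq, Fintype.sum_prod_type]
    refine Finset.sum_congr rfl fun a _ => ?_
    rw [Fintype.sum_prod_type]
    refine Finset.sum_congr rfl fun b _ => Finset.sum_congr rfl fun c _ => ?_
    congr 1
    exact pm_congr fun ω => by simp [Prod.ext_iff, and_assoc]
  have hAB : shannonEntropy p (fun ω => (A ω, B ω))
      = ∑ a : α, ∑ b : β, Real.negMulLog (pm p fun ω => A ω = a ∧ B ω = b) := by
    rw [entropy_eq, Fintype.sum_prod_type]
    exact Finset.sum_congr rfl fun a _ => Finset.sum_congr rfl fun b _ => by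
      congr 1
      exact pm_congr fun ω => by simp [Prod.ext_iff]
  have hAC : shannonEntropy p (fun ω => (A ω, C ω))
      = ∑ a : α, ∑ c : γ, Real.negMulLog (pm p fun ω => A ω = a ∧ C ω = c) := by
    rw [entropy_eq, Fintype.sum_prod_type]
    exact Finset.sum_congr rfl fun a _ => Finset.sum_congr rfl fun c _ => by
      congr 1
      exact pm_congr fun ω => by simp [Prod.ext_iff]
  have hA : shannonEntropy p A = ∑ a : α, Real.negMulLog (pm p fun ω => A ω = a) :=
    entropy_eq p A
  -- marginal decompositions
  have mA : ∀ a : α, (pm p fun ω => A ω = a)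
      = ∑ b : β, ∑ c : γ, pm p fun ω => A ω = a ∧ B ω = b ∧ C ω = c := by
    intro a
    rw [pm_fiber (fun ω => A ω = a) B]
    refine Finset.sum_congr rfl fun b _ => ?_
    rw [pm_fiber (fun ω => A ω = a ∧ B ω = b) C]
    exact Finset.sum_congr rfl fun c _ => pm_congr fun ω => by tauto
  have mAB : ∀ (a : α) (b : β), (pm p fun ω => A ω = a ∧ B ω = b)
      = ∑ c : γ, pm p fun ω => A ω = a ∧ B ω = b ∧ C ω = c := by
    intro a b
    rw [pm_fiber (fun ω => A ω = a ∧ B ω = b) C]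
    exact Finset.sum_congr rfl fun c _ => pm_congr fun ω => by tauto
  have mAC : ∀ (a : α) (c : γ), (pm p fun ω => A ω = a ∧ C ω = c)
      = ∑ b : β, pm p fun ω => A ω = a ∧ B ω = b ∧ C ω = c := by
    intro a c
    rw [pm_fiber (fun ω => A ω = a ∧ C ω = c) B]
    exact Finset.sum_congr rfl fun b _ => pm_congr fun ω => by tauto
  -- express all four entropies as triple sums
  have eA : shannonEntropy p A = -∑ a : α, ∑ b : β, ∑ c : γ,
      (pm p fun ω => A ω = a ∧ B ω = b ∧ C ω = c) * Real.log (pm p fun ω => A ω = a) := by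
    rw [hA]
    simp only [Real.negMulLog, neg_mul, Finset.sum_neg_distrib]
    congr 1
    refine Finset.sum_congr rfl fun a _ => ?_
    rw [mA a, Finset.sum_mul]
    exact Finset.sum_congr rfl fun b _ => by rw [Finset.sum_mul]
  have eAB : shannonEntropy p (fun ω => (A ω, B ω)) = -∑ a : α, ∑ b : β, ∑ c : γ,
      (pm p fun ω => A ω = a ∧ B ω = b ∧ C ω = c) *
        Real.log (pm p fun ω => A ω = a ∧ B ω = b) := by
    rw [hAB]
    simp only [Real.negMulLog, neg_mul, Finset.sum_neg_distrib]
    congr 1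
    refine Finset.sum_congr rfl fun a _ => Finset.sum_congr rfl fun b _ => ?_
    rw [mAB a b, Finset.sum_mul]
  have eAC : shannonEntropy p (fun ω => (A ω, C ω)) = -∑ a : α, ∑ b : β, ∑ c : γ,
      (pm p fun ω => A ω = a ∧ B ω = b ∧ C ω = c) *
        Real.log (pm p fun ω => A ω = a ∧ C ω = c) := by
    rw [hAC]
    simp only [Real.negMulLog, neg_mul, Finset.sum_neg_distrib]
    congr 1
    refine Finset.sum_congr rfl fun a _ => ?_
    rw [Finset.sum_comm]
    refine Finset.sum_congr rfl fun c _ => ?_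
    rw [mAC a c, Finset.sum_mul]
  have eABC : shannonEntropy p (fun ω => (A ω, B ω, C ω)) = -∑ a : α, ∑ b : β, ∑ c : γ,
      (pm p fun ω => A ω = a ∧ B ω = b ∧ C ω = c) *
        Real.log (pm p fun ω => A ω = a ∧ B ω = b ∧ C ω = c) := by
    rw [hABC]
    simp only [Real.negMulLog, neg_mul, Finset.sum_neg_distrib]
  rw [eABC, eA, eAB, eAC]
  rw [← neg_add, ← neg_add, neg_inj]
  simp only [← Finset.sum_add_distrib]
  refine Finset.sum_congr rfl fun a _ => Finset.sum_congr rfl fun b _ =>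
    Finset.sum_congr rfl fun c _ => ?_
  -- per-term identity
  set f := pm p fun ω => A ω = a ∧ B ω = b ∧ C ω = c with hfdef
  rcases eq_or_lt_of_le (pm_nonneg hp0 (fun ω => A ω = a ∧ B ω = b ∧ C ω = c)) with h0 | h0
  · have hf0 : f = 0 := by rw [hfdef, ← h0]
    rw [hf0]; ring
  · rw [← hfdef] at h0
    have hfA : 0 < pm p fun ω => A ω = a := lt_of_lt_of_le h0 (pm_mono hp0 fun ω hw => hw.1)
    have hfAB : 0 < pm p fun ω => A ω = a ∧ B ω = b :=
      lt_of_lt_of_le h0 (pm_mono hp0 fun ω hw => ⟨hw.1, hw.2.1⟩)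
    have hfAC : 0 < pm p fun ω => A ω = a ∧ C ω = c :=
      lt_of_lt_of_le h0 (pm_mono hp0 fun ω hw => ⟨hw.1, hw.2.2⟩)
    have hlog : Real.log f + Real.log (pm p fun ω => A ω = a)
        = Real.log (pm p fun ω => A ω = a ∧ B ω = b)
          + Real.log (pm p fun ω => A ω = a ∧ C ω = c) := by
      rw [← Real.log_mul (ne_of_gt h0) (ne_of_gt hfA),
        ← Real.log_mul (ne_of_gt hfAB) (ne_of_gt hfAC), h a b c]
    linear_combination f * hlog

section CI

variable {V M U : Type*} [Fintype V] [DecidableEq V] [Fintype M] [DecidableEq M]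
    [Fintype U] [DecidableEq U]
variable (X : V → Ω → M) (FU : Ω → U)

lemma ci_subset (hp0 : ∀ ω, 0 ≤ p ω)
    (hci : ∀ (u : U) (a : V → M),
      (pm p fun ω => FU ω = u ∧ ∀ v : V, X v ω = a v) *
        (pm p fun ω => FU ω = u) ^ (Fintype.card V - 1)
        = ∏ v : V, pm p fun ω => FU ω = u ∧ X v ω = a v)
    (W : Finset V) (hW : W.Nonempty) (u : U) (a : V → M) :
    (pm p fun ω => FU ω = u ∧ ∀ v ∈ W, X v ω = a v) *
      (pm p fun ω => FU ω = u) ^ (W.card - 1)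
      = ∏ v ∈ W, pm p fun ω => FU ω = u ∧ X v ω = a v := by
  classical
  obtain ⟨k, hk⟩ : ∃ k, Fintype.card V - W.card = k := ⟨_, rfl⟩
  induction k generalizing W a with
  | zero =>
    have hcard : W.card = Fintype.card V :=
      le_antisymm (Finset.card_le_univ W) (Nat.le_of_sub_eq_zero hk)
    have hWu : W = Finset.univ := Finset.eq_univ_of_card W hcard
    subst hWu
    have h1 : (pm p fun ω => FU ω = u ∧ ∀ v ∈ Finset.univ, X v ω = a v)
        = pm p fun ω => FU ω = u ∧ ∀ v : V, X v ω = a v :=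
      pm_congr fun ω => by simp
    rw [h1, Finset.card_univ, hci u a]
  | succ k ih =>
    have hlt : W.card < Fintype.card V := by
      have h := Finset.card_le_univ W
      omega
    have hcompl : (Wᶜ : Finset V).Nonempty := by
      rw [← Finset.card_pos, Finset.card_compl]
      omega
    obtain ⟨w, hw⟩ := hcompl
    have hwW : w ∉ W := Finset.mem_compl.mp hw
    have hk' : Fintype.card V - (insert w W).card = k := by
      rw [Finset.card_insert_of_notMem hwW]
      omega
    have key := fun m : M => ih (insert w W) (Finset.insert_nonempty w W)
      (Function.update a w m) hk'
    have hcard : (insert w W).card - 1 = W.card := by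
      rw [Finset.card_insert_of_notMem hwW]
      omega
    -- sum the instances over m
    have hsum : ∑ m : M, (pm p fun ω => FU ω = u ∧ ∀ v ∈ insert w W,
          X v ω = Function.update a w m v) * (pm p fun ω => FU ω = u) ^ W.card
        = ∑ m : M, (pm p fun ω => FU ω = u ∧ X w ω = m) *
            ∏ v ∈ W, pm p fun ω => FU ω = u ∧ X v ω = a v := by
      refine Finset.sum_congr rfl fun m _ => ?_
      rw [← hcard, key m, Finset.prod_insert hwW, Function.update_self]
      congr 1
      refine Finset.prod_congr rfl fun v hv => ?_
      rw [Function.update_of_ne (fun (hvw : v = w) => hwW (hvw ▸ hv)) _ _]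
    have hL : ∑ m : M, (pm p fun ω => FU ω = u ∧ ∀ v ∈ insert w W,
          X v ω = Function.update a w m v) * (pm p fun ω => FU ω = u) ^ W.card
        = (pm p fun ω => FU ω = u ∧ ∀ v ∈ W, X v ω = a v) *
            (pm p fun ω => FU ω = u) ^ W.card := by
      rw [← Finset.sum_mul]
      congr 1
      rw [pm_fiber (fun ω => FU ω = u ∧ ∀ v ∈ W, X v ω = a v) (X w)]
      refine Finset.sum_congr rfl fun m _ => pm_congr fun ω => ?_
      constructor
      · rintro ⟨hu, hall⟩
        have hxw : X w ω = m := by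
          have := hall w (Finset.mem_insert_self w W)
          rwa [Function.update_self] at this
        refine ⟨⟨hu, fun v hv => ?_⟩, hxw⟩
        have := hall v (Finset.mem_insert_of_mem hv)
        rwa [Function.update_of_ne (fun (hvw : v = w) => hwW (hvw ▸ hv)) _ _] at this
      · rintro ⟨⟨hu, hall⟩, hxw⟩
        refine ⟨hu, fun v hv => ?_⟩
        rcases Finset.mem_insert.mp hv with rfl | hv'
        · rwa [Function.update_self]
        · rw [Function.update_of_ne (fun (hvw : v = w) => hwW (hvw ▸ hv')) _ _]
          exact hall v hv'
    have hR : ∑ m : M, (pm p fun ω => FU ω = u ∧ X w ω = m) *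
          ∏ v ∈ W, pm p fun ω => FU ω = u ∧ X v ω = a v
        = (pm p fun ω => FU ω = u) * ∏ v ∈ W, pm p fun ω => FU ω = u ∧ X v ω = a v := by
      rw [← Finset.sum_mul]
      congr 1
      exact (pm_fiber (fun ω => FU ω = u) (X w)).symm
    have E1 : (pm p fun ω => FU ω = u ∧ ∀ v ∈ W, X v ω = a v) *
          (pm p fun ω => FU ω = u) ^ W.card
        = (pm p fun ω => FU ω = u) * ∏ v ∈ W, pm p fun ω => FU ω = u ∧ X v ω = a v := by
      rw [← hL, hsum, hR]
    by_cases hP : (pm p fun ω => FU ω = u) = 0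
    · obtain ⟨v₀, hv₀⟩ := hW
      have h1 : (pm p fun ω => FU ω = u ∧ ∀ v ∈ W, X v ω = a v) = 0 :=
        le_antisymm (hP ▸ pm_mono hp0 fun ω hw' => hw'.1) (pm_nonneg hp0 _)
      have h2 : (pm p fun ω => FU ω = u ∧ X v₀ ω = a v₀) = 0 :=
        le_antisymm (hP ▸ pm_mono hp0 fun ω hw' => hw'.1) (pm_nonneg hp0 _)
      rw [h1, zero_mul, Finset.prod_eq_zero hv₀ h2]
    · have hWc : W.card = (W.card - 1) + 1 := (Nat.succ_pred_eq_of_pos hW.card_pos).symm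
      apply mul_right_cancel₀ hP
      calc (pm p fun ω => FU ω = u ∧ ∀ v ∈ W, X v ω = a v) *
            (pm p fun ω => FU ω = u) ^ (W.card - 1) * (pm p fun ω => FU ω = u)
          = (pm p fun ω => FU ω = u ∧ ∀ v ∈ W, X v ω = a v) *
            (pm p fun ω => FU ω = u) ^ W.card := by
            have hpow : (pm p fun ω => FU ω = u) ^ W.card
                = (pm p fun ω => FU ω = u) ^ (W.card - 1) * (pm p fun ω => FU ω = u) := by
              rw [← pow_succ, Nat.sub_add_cancel hW.card_pos]
            rw [hpow]
            ring
        _ = (pm p fun ω => FU ω = u) *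
              ∏ v ∈ W, pm p fun ω => FU ω = u ∧ X v ω = a v := E1
        _ = (∏ v ∈ W, pm p fun ω => FU ω = u ∧ X v ω = a v) *
              (pm p fun ω => FU ω = u) := mul_comm _ _

lemma ci_pair (hp0 : ∀ ω, 0 ≤ p ω)
    (hci : ∀ (u : U) (a : V → M),
      (pm p fun ω => FU ω = u ∧ ∀ v : V, X v ω = a v) *
        (pm p fun ω => FU ω = u) ^ (Fintype.card V - 1)
        = ∏ v : V, pm p fun ω => FU ω = u ∧ X v ω = a v)
    (S : Finset V) (z : V) (hz : z ∉ S) (u : U) (a : V → M) (m : M) :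
    (pm p fun ω => FU ω = u ∧ (∀ v ∈ S, X v ω = a v) ∧ X z ω = m) *
        (pm p fun ω => FU ω = u)
      = (pm p fun ω => FU ω = u ∧ ∀ v ∈ S, X v ω = a v) *
          (pm p fun ω => FU ω = u ∧ X z ω = m) := by
  classical
  by_cases hP : (pm p fun ω => FU ω = u) = 0
  · have h2 : (pm p fun ω => FU ω = u ∧ X z ω = m) = 0 :=
      le_antisymm (hP ▸ pm_mono hp0 fun ω hw' => hw'.1) (pm_nonneg hp0 _)
    rw [hP, h2, mul_zero, mul_zero]
  rcases S.eq_empty_or_nonempty with rfl | hS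
  · simp only [Finset.notMem_empty, false_implies, implies_true, true_and]
    rw [mul_comm]
    congr 1
    exact pm_congr fun ω => by tauto
  · -- use ci_subset at insert z S with updated a, and at S
    have h1 := ci_subset X FU hp0 hci (insert z S) (Finset.insert_nonempty z S) u
      (Function.update a z m)
    have h2 := ci_subset X FU hp0 hci S hS u a
    rw [Finset.card_insert_of_notMem hz, Nat.add_sub_cancel, Finset.prod_insert hz,
      Function.update_self] at h1
    have hprodS : ∏ v ∈ S, (pm p fun ω => FU ω = u ∧ X v ω = Function.update a z m v)
        = ∏ v ∈ S, pm p fun ω => FU ω = u ∧ X v ω = a v :=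
      Finset.prod_congr rfl fun v hv =>
        by rw [Function.update_of_ne (fun (hvz : v = z) => hz (hvz ▸ hv)) _ _]
    rw [hprodS, ← h2] at h1
    have hcond : (pm p fun ω => FU ω = u ∧ ∀ v ∈ insert z S,
          X v ω = Function.update a z m v)
        = pm p fun ω => FU ω = u ∧ (∀ v ∈ S, X v ω = a v) ∧ X z ω = m := by
      refine pm_congr fun ω => ?_
      constructor
      · rintro ⟨hu, hall⟩
        refine ⟨hu, fun v hv => ?_, ?_⟩
        · have := hall v (Finset.mem_insert_of_mem hv)
          rwa [Function.update_of_ne (fun (hvz : v = z) => hz (hvz ▸ hv)) _ _] at this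
        · have := hall z (Finset.mem_insert_self z S)
          rwa [Function.update_self] at this
      · rintro ⟨hu, hall, hxz⟩
        refine ⟨hu, fun v hv => ?_⟩
        rcases Finset.mem_insert.mp hv with rfl | hv'
        · rwa [Function.update_self]
        · rw [Function.update_of_ne (fun (hvz : v = z) => hz (hvz ▸ hv')) _ _]
          exact hall v hv'
    rw [hcond] at h1
    -- h1 : pm(u, S-a, z-m) * P^(S.card) = pm(u,z=m) * (pm(u,S-a) * P^(S.card-1))
    have hSc : S.card = (S.card - 1) + 1 := (Nat.succ_pred_eq_of_pos hS.card_pos).symm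
    have hPpow : (pm p fun ω => FU ω = u) ^ (S.card - 1) ≠ 0 := pow_ne_zero _ hP
    apply mul_right_cancel₀ hPpow
    calc (pm p fun ω => FU ω = u ∧ (∀ v ∈ S, X v ω = a v) ∧ X z ω = m) *
          (pm p fun ω => FU ω = u) * (pm p fun ω => FU ω = u) ^ (S.card - 1)
        = (pm p fun ω => FU ω = u ∧ (∀ v ∈ S, X v ω = a v) ∧ X z ω = m) *
          (pm p fun ω => FU ω = u) ^ S.card := by
          have hpow : (pm p fun ω => FU ω = u) ^ S.card
              = (pm p fun ω => FU ω = u) ^ (S.card - 1) * (pm p fun ω => FU ω = u) := by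
            rw [← pow_succ, Nat.sub_add_cancel hS.card_pos]
          rw [hpow]
          ring
      _ = (pm p fun ω => FU ω = u ∧ X z ω = m) *
            ((pm p fun ω => FU ω = u ∧ ∀ v ∈ S, X v ω = a v) *
              (pm p fun ω => FU ω = u) ^ (S.card - 1)) := h1
      _ = (pm p fun ω => FU ω = u ∧ ∀ v ∈ S, X v ω = a v) *
            (pm p fun ω => FU ω = u ∧ X z ω = m) *
            (pm p fun ω => FU ω = u) ^ (S.card - 1) := by ring

end CI

end MISub

set_option maxHeartbeats 2000000

/-- The mutual-information set function `g(S) = H(F_U) − H(F_U | F_S)` is submodular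
when the sensor measurements `X v` are conditionally independent given the target
variable `F_U`:  for `S ⊆ T` and `z ∉ T`,
`g(S ∪ {z}) − g(S) ≥ g(T ∪ {z}) − g(T)`. -/
theorem mutual_information_submodular
    {Ω V M U : Type*} [Fintype Ω] [Fintype V] [DecidableEq V] [Fintype M]
    [DecidableEq M] [Fintype U] [DecidableEq U]
    (p : Ω → ℝ) (hp0 : ∀ ω, 0 ≤ p ω) (hp1 : ∑ ω : Ω, p ω = 1)
    (X : V → Ω → M) (FU : Ω → U)
    -- conditional independence of the measurements given `F_U`:
    -- P(F_U = u, ∀ v, X_v = a_v) · P(F_U = u)^(|V| - 1) = ∏_v P(F_U = u, X_v = a_v)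
    (hci : ∀ (u : U) (a : V → M),
      (∑ ω ∈ Finset.univ.filter (fun ω => FU ω = u ∧ ∀ v : V, X v ω = a v), p ω) *
        (∑ ω ∈ Finset.univ.filter (fun ω => FU ω = u), p ω) ^ (Fintype.card V - 1) =
      ∏ v : V, ∑ ω ∈ Finset.univ.filter (fun ω => FU ω = u ∧ X v ω = a v), p ω)
    (g : Finset V → ℝ)
    (hg : ∀ S : Finset V,
      g S = shannonEntropy p FU -
        (shannonEntropy p (fun ω => (FU ω, fun v : {x // x ∈ S} => X v.1 ω)) -
          shannonEntropy p (fun ω => (fun v : {x // x ∈ S} => X v.1 ω))))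
    (S T : Finset V) (hST : S ⊆ T) (z : V) (hz : z ∉ T) :
    g (insert z S) - g S ≥ g (insert z T) - g T := by
  classical
  have hΩ : Nonempty Ω := by
    by_contra h
    have h0 : ∑ ω : Ω, p ω = 0 :=
      Finset.sum_eq_zero fun ω _ => absurd (Nonempty.intro ω) h
    rw [hp1] at h0
    exact one_ne_zero h0
  have m₀ : M := X z hΩ.some
  have hzS : z ∉ S := fun h => hz (hST h)
  have hci' : ∀ (u : U) (a : V → M),
      (MISub.pm p fun ω => FU ω = u ∧ ∀ v : V, X v ω = a v) *
        (MISub.pm p fun ω => FU ω = u) ^ (Fintype.card V - 1)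
        = ∏ v : V, MISub.pm p fun ω => FU ω = u ∧ X v ω = a v := by
    intro u a
    simp only [MISub.pm_def]
    exact hci u a
  -- key equality: adding `z` to the conditioned entropies is independent of the set
  have keyEq : ∀ (R : Finset V), z ∉ R →
      shannonEntropy p (fun ω => (FU ω, fun v : {x // x ∈ insert z R} => X v.1 ω))
        = shannonEntropy p (fun ω => (FU ω, fun v : {x // x ∈ R} => X v.1 ω))
          + shannonEntropy p (fun ω => (FU ω, X z ω)) - shannonEntropy p FU := by
    intro R hzR
    have he : Function.Injective
        (fun q : U × ({x // x ∈ insert z R} → M) =>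
          (q.1, ((fun v : {x // x ∈ R} => q.2 ⟨v.1, Finset.mem_insert_of_mem v.2⟩),
            q.2 ⟨z, Finset.mem_insert_self z R⟩))) := by
      rintro ⟨u1, f1⟩ ⟨u2, f2⟩ hq
      simp only [Prod.mk.injEq] at hq
      obtain ⟨hu, hrest, hzval⟩ := hq
      refine Prod.ext hu ?_
      funext v
      rcases Finset.mem_insert.mp v.2 with hv | hv
      · have hveq : v = ⟨z, Finset.mem_insert_self z R⟩ := Subtype.ext hv
        rw [hveq]
        exact hzval
      · exact congrFun hrest ⟨v.1, hv⟩
    have h1 : shannonEntropy p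
        (fun ω => (FU ω, ((fun v : {x // x ∈ R} => X v.1 ω), X z ω)))
        = shannonEntropy p (fun ω => (FU ω, fun v : {x // x ∈ insert z R} => X v.1 ω)) :=
      MISub.entropy_comp_inj p
        (fun ω => (FU ω, fun v : {x // x ∈ insert z R} => X v.1 ω)) _ he
    have hch : ∀ (u : U) (b : {x // x ∈ R} → M) (m : M),
        (MISub.pm p fun ω => FU ω = u ∧ (fun v : {x // x ∈ R} => X v.1 ω) = b ∧ X z ω = m) *
          (MISub.pm p fun ω => FU ω = u)
        = (MISub.pm p fun ω => FU ω = u ∧ (fun v : {x // x ∈ R} => X v.1 ω) = b) *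
            (MISub.pm p fun ω => FU ω = u ∧ X z ω = m) := by
      intro u b m
      have hb : ∀ ω, ((fun v : {x // x ∈ R} => X v.1 ω) = b)
          ↔ (∀ v ∈ R, X v ω = if h : v ∈ R then b ⟨v, h⟩ else m₀) := by
        intro ω
        constructor
        · intro h v hv
          rw [dif_pos hv]
          exact congrFun h ⟨v, hv⟩
        · intro h
          funext v
          have hv := h v.1 v.2
          rwa [dif_pos v.2] at hv
      have c1 : (MISub.pm p fun ω =>
            FU ω = u ∧ (fun v : {x // x ∈ R} => X v.1 ω) = b ∧ X z ω = m)
          = MISub.pm p fun ω => FU ω = u ∧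
              (∀ v ∈ R, X v ω = if h : v ∈ R then b ⟨v, h⟩ else m₀) ∧ X z ω = m :=
        MISub.pm_congr fun ω => by rw [hb ω]
      have c2 : (MISub.pm p fun ω => FU ω = u ∧ (fun v : {x // x ∈ R} => X v.1 ω) = b)
          = MISub.pm p fun ω => FU ω = u ∧
              (∀ v ∈ R, X v ω = if h : v ∈ R then b ⟨v, h⟩ else m₀) :=
        MISub.pm_congr fun ω => by rw [hb ω]
      rw [c1, c2]
      exact MISub.ci_pair X FU hp0 hci' R z hzR u
        (fun v => if h : v ∈ R then b ⟨v, h⟩ else m₀) m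
    have hchain : shannonEntropy p
          (fun ω => (FU ω, ((fun v : {x // x ∈ R} => X v.1 ω), X z ω)))
          + shannonEntropy p FU
        = shannonEntropy p (fun ω => (FU ω, fun v : {x // x ∈ R} => X v.1 ω))
          + shannonEntropy p (fun ω => (FU ω, X z ω)) :=
      MISub.chain_eq hp0 FU (fun ω => fun v : {x // x ∈ R} => X v.1 ω) (X z) hch
    linarith [h1, hchain]
  -- reindexing for the unconditioned entropies
  have keyRe : ∀ (R : Finset V),
      shannonEntropy p (fun ω => (fun v : {x // x ∈ insert z R} => X v.1 ω))
        = shannonEntropy p (fun ω => (X z ω, fun v : {x // x ∈ R} => X v.1 ω)) := by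
    intro R
    have he : Function.Injective (fun f : {x // x ∈ insert z R} → M =>
        (f ⟨z, Finset.mem_insert_self z R⟩,
          (fun v : {x // x ∈ R} => f ⟨v.1, Finset.mem_insert_of_mem v.2⟩))) := by
      intro f1 f2 hq
      simp only [Prod.mk.injEq] at hq
      funext v
      rcases Finset.mem_insert.mp v.2 with hv | hv
      · have hveq : v = ⟨z, Finset.mem_insert_self z R⟩ := Subtype.ext hv
        rw [hveq]
        exact hq.1
      · exact congrFun hq.2 ⟨v.1, hv⟩
    exact (MISub.entropy_comp_inj p
      (fun ω => fun v : {x // x ∈ insert z R} => X v.1 ω) _ he).symm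
  -- the monotonicity of conditional entropy
  have hineq : shannonEntropy p (fun ω => (X z ω, fun v : {x // x ∈ T} => X v.1 ω))
        - shannonEntropy p (fun ω => (fun v : {x // x ∈ T} => X v.1 ω))
      ≤ shannonEntropy p (fun ω => (X z ω, fun v : {x // x ∈ S} => X v.1 ω))
        - shannonEntropy p (fun ω => (fun v : {x // x ∈ S} => X v.1 ω)) :=
    MISub.cond_entropy_mono hp0 (X z) (fun ω => fun v : {x // x ∈ T} => X v.1 ω)
      (fun f => fun v : {x // x ∈ S} => f ⟨v.1, hST v.2⟩)
  have kS := keyEq S hzS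
  have kT := keyEq T hz
  have rS := keyRe S
  have rT := keyRe T
  rw [hg (insert z S), hg S, hg (insert z T), hg T]
  linarith [kS, kT, rS, rT, hineq]
end

section
/- Greedy maximization of a monotone submodular function subject to a matroid constraint using an α-approximate greedy oracle achieves value at least OPT/(α+1): if at each step the element added has marginal gain at least 1/α times the best available marginal gain, the final independent set S satisfies f(S) ≥ f(S*)/(α+1) where S* is an optimal basis. -/
open Finset

section Aux
variable {E : Type*} [DecidableEq E]

private lemma marg_mono (f : Finset E → ℝ)
    (hsub : ∀ A B : Finset E, f A + f B ≥ f (A ∪ B) + f (A ∩ B))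
    {A B : Finset E} (hAB : A ⊆ B) {x : E} (hx : x ∉ B) :
    f (insert x B) - f B ≤ f (insert x A) - f A := by
  have h := hsub (insert x A) B
  have h1 : insert x A ∪ B = insert x B := by
    rw [insert_union, union_eq_right.mpr hAB]
  have h2 : insert x A ∩ B = A := by
    ext y
    simp only [mem_inter, mem_insert]
    constructor
    · rintro ⟨(rfl | hy), hyB⟩
      · exact absurd hyB hx
      · exact hy
    · intro hy; exact ⟨Or.inr hy, hAB hy⟩
  rw [h1, h2] at h
  linarith

private lemma sum_marg (f : Finset E → ℝ)
    (hsub : ∀ A B : Finset E, f A + f B ≥ f (A ∪ B) + f (A ∩ B))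
    (A : Finset E) (D : Finset E) (hD : Disjoint A D) :
    f (A ∪ D) ≤ f A + ∑ x ∈ D, (f (insert x A) - f A) := by
  induction D using Finset.induction_on with
  | empty => simp
  | @insert x D hx ih =>
    have hD' : Disjoint A D := hD.mono_right (subset_insert x D)
    have hxA : x ∉ A := fun h => (disjoint_left.mp hD) h (mem_insert_self x D)
    have hxAD : x ∉ A ∪ D := by simp [hxA, hx]
    have h2 := marg_mono f hsub (subset_union_left : A ⊆ A ∪ D) hxAD
    rw [union_insert, Finset.sum_insert hx]
    have := ih hD'
    linarith

private lemma matroid_extend (Ind : Finset E → Prop)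
    (hexch : ∀ A B : Finset E, Ind A → Ind B → A.card < B.card →
      ∃ x ∈ B \ A, Ind (insert x A)) :
    ∀ (k : ℕ) (A B : Finset E), B.card - A.card ≤ k → Ind A → Ind B →
      A.card ≤ B.card →
      ∃ C, Ind C ∧ A ⊆ C ∧ C ⊆ A ∪ B ∧ C.card = B.card := by
  intro k
  induction k with
  | zero =>
    intro A B hk hA hB hle
    exact ⟨A, hA, subset_rfl, subset_union_left, le_antisymm hle (by omega)⟩
  | succ k ih =>
    intro A B hk hA hB hle
    rcases eq_or_lt_of_le hle with h | h
    · exact ⟨A, hA, subset_rfl, subset_union_left, h⟩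
    · obtain ⟨x, hx, hAx⟩ := hexch A B hA hB h
      have hxB : x ∈ B := (Finset.mem_sdiff.mp hx).1
      have hxA : x ∉ A := (Finset.mem_sdiff.mp hx).2
      obtain ⟨C, hC, h1, h2, h3⟩ := ih (insert x A) B
        (by rw [card_insert_of_notMem hxA]; omega) hAx hB
        (by rw [card_insert_of_notMem hxA]; omega)
      refine ⟨C, hC, (subset_insert x A).trans h1, h2.trans ?_, h3⟩
      rw [insert_union, insert_eq_self.mpr (mem_union_right A hxB)]

private lemma nested_pick [Nonempty E] :
    ∀ (n : ℕ) (A : ℕ → Finset E), (∀ i, A (i + 1) ⊆ A i) →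
    (∀ i < n, n - i ≤ (A i).card) →
    ∃ g : ℕ → E, (∀ i < n, g i ∈ A i) ∧
      (∀ i < n, ∀ j < n, g i = g j → i = j) := by
  intro n
  induction n with
  | zero =>
    intro A _ _
    exact ⟨fun _ => Classical.arbitrary E, fun i hi => by omega, fun i hi => by omega⟩
  | succ n ih =>
    intro A hA hcard
    have hAn : (A n).Nonempty := by
      rw [← card_pos]
      have := hcard n (by omega)
      omega
    obtain ⟨x, hx⟩ := hAn
    obtain ⟨g, hg1, hg2⟩ := ih (fun i => A i \ {x})
      (fun i => sdiff_subset_sdiff (hA i) subset_rfl)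
      (fun i hi => by
        show n - i ≤ (A i \ {x}).card
        have h1 := hcard i (by omega)
        have h2 : (A i).card ≤ (A i \ {x}).card + ({x} : Finset E).card :=
          Finset.card_le_card_sdiff_add_card
        simp only [card_singleton] at h2
        omega)
    refine ⟨fun i => if i = n then x else g i, ?_, ?_⟩
    · intro i hi
      by_cases h : i = n
      · subst h; simpa using hx
      · have hi' : i < n := by omega
        simp only [h, if_false]
        exact (mem_sdiff.mp (hg1 i hi')).1
    · intro i hi j hj heq
      by_cases h1 : i = n <;> by_cases h2 : j = n
      · omega
      · exfalso
        have hj' : j < n := by omega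
        have := (mem_sdiff.mp (hg1 j hj')).2
        simp only [h1, if_true, h2, if_false] at heq
        simp [← heq] at this
      · exfalso
        have hi' : i < n := by omega
        have := (mem_sdiff.mp (hg1 i hi')).2
        simp only [h1, if_false, h2, if_true] at heq
        simp [heq] at this
      · have hi' : i < n := by omega
        have hj' : j < n := by omega
        simp only [h1, if_false, h2] at heq
        exact hg2 i hi' j hj' heq

end Aux

/-- α-approximate greedy maximization of a monotone submodular function subject
to a matroid constraint achieves value at least `OPT/(α+1)`. -/
theorem greedy_matroid_alpha_approx {E : Type*} [Fintype E] [DecidableEq E]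
    (f : Finset E → ℝ)
    (hmono : ∀ A B : Finset E, A ⊆ B → f A ≤ f B)
    (hsub : ∀ A B : Finset E, f A + f B ≥ f (A ∪ B) + f (A ∩ B))
    (hempty : f ∅ = 0)
    (Ind : Finset E → Prop)               -- independent sets of the matroid
    (hInd_empty : Ind ∅)
    (hInd_down : ∀ A B : Finset E, A ⊆ B → Ind B → Ind A)
    (hInd_exch : ∀ A B : Finset E, Ind A → Ind B → A.card < B.card →
      ∃ x ∈ B \ A, Ind (insert x A))
    (α : ℝ) (hα : 1 ≤ α)
    (n : ℕ) (S : ℕ → Finset E)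
    (hS0 : S 0 = ∅)
    -- the greedy steps: each added element is feasible and its marginal gain is
    -- at least `1/α` of the best feasible marginal gain
    (hstep : ∀ i < n, ∃ e ∉ S i,
      S (i + 1) = insert e (S i) ∧ Ind (S (i + 1)) ∧
      ∀ e' ∉ S i, Ind (insert e' (S i)) →
        α * (f (insert e (S i)) - f (S i)) ≥ f (insert e' (S i)) - f (S i))
    -- the greedy algorithm terminates with a maximal independent set (a basis)
    (hmax : ∀ e ∉ S n, ¬ Ind (insert e (S n))) :
    ∀ Ostar : Finset E, Ind Ostar → f (S n) ≥ f Ostar / (α + 1) := by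
  intro O hO
  classical
  have hα1 : (0:ℝ) < α + 1 := by linarith
  -- chain facts
  have hstep' : ∀ i < n, S i ⊆ S (i + 1) := by
    intro i hi
    obtain ⟨e, he, heq, -, -⟩ := hstep i hi
    rw [heq]; exact subset_insert e (S i)
  have hSsub : ∀ i j, i ≤ j → j ≤ n → S i ⊆ S j := by
    intro i j hij hjn
    induction j with
    | zero => simp [Nat.le_zero.mp hij]
    | succ j ih =>
      rcases Nat.lt_or_ge i (j + 1) with h | h
      · exact (ih (by omega) (by omega)).trans (hstep' j (by omega))
      · have : i = j + 1 := by omega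
        subst this; exact subset_rfl
  have hScard : ∀ i, i ≤ n → (S i).card = i := by
    intro i
    induction i with
    | zero => intro _; simp [hS0]
    | succ i ih =>
      intro h
      obtain ⟨e, he, heq, -, -⟩ := hstep i (by omega)
      rw [heq, card_insert_of_notMem he, ih (by omega)]
  have hSInd : ∀ i, i ≤ n → Ind (S i) := by
    intro i hi
    rcases Nat.eq_zero_or_pos i with h | h
    · subst h; rwa [hS0]
    · obtain ⟨j, rfl⟩ : ∃ j, i = j + 1 := ⟨i - 1, by omega⟩
      obtain ⟨e, he, heq, hind, -⟩ := hstep j (by omega)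
      exact hind
  have hgain : ∀ i < n, 0 ≤ f (S (i + 1)) - f (S i) := by
    intro i hi
    have := hmono _ _ (hstep' i hi)
    linarith
  -- |O| ≤ n
  have hOcard : O.card ≤ n := by
    by_contra h
    push_neg at h
    obtain ⟨x, hx, hxi⟩ := hInd_exch (S n) O (hSInd n le_rfl) hO
      (by rw [hScard n le_rfl]; omega)
    exact hmax x (mem_sdiff.mp hx).2 hxi
  -- extend O to a set O' of cardinality n
  obtain ⟨O', hO'Ind, hOO', hO'sub, hO'card⟩ :=
    matroid_extend Ind hInd_exch ((S n).card - O.card) O (S n)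
      le_rfl hO (hSInd n le_rfl) (by rw [hScard n le_rfl]; exact hOcard)
  rw [hScard n le_rfl] at hO'card
  have hfO : f O ≤ f O' := hmono _ _ hOO'
  -- handle n = 0
  rcases Nat.eq_zero_or_pos n with hn | hn
  · subst hn
    have : O' = ∅ := card_eq_zero.mp hO'card
    rw [this] at hfO
    rw [hS0, hempty, ge_iff_le, div_le_iff₀ hα1]
    nlinarith [hmono ∅ (S 0) (by rw [hS0]), hempty]
  -- E is nonempty
  obtain ⟨e₀, he₀⟩ : (S n).Nonempty := by
    rw [← card_pos, hScard n le_rfl]; exact hn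
  haveI : Nonempty E := ⟨e₀⟩
  -- the nested family
  set A : ℕ → Finset E := fun i => O'.filter (fun o => Ind (insert o (S (min i n))))
    with hAdef
  have hAanti : ∀ i, A (i + 1) ⊆ A i := by
    intro i
    intro o ho
    rw [hAdef, mem_filter] at ho ⊢
    refine ⟨ho.1, hInd_down _ _ (insert_subset_insert o ?_) ho.2⟩
    exact hSsub (min i n) (min (i + 1) n) (by omega) (by omega)
  have hAcard : ∀ i < n, n - i ≤ (A i).card := by
    intro i hi
    obtain ⟨C, hCInd, hC1, hC2, hC3⟩ :=
      matroid_extend Ind hInd_exch (O'.card - (S i).card) (S i) O'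
        le_rfl (hSInd i (by omega)) hO'Ind
        (by rw [hScard i (by omega), hO'card]; omega)
    have hsub' : C \ S i ⊆ A i := by
      intro o ho
      rw [mem_sdiff] at ho
      rw [hAdef, mem_filter]
      constructor
      · rcases mem_union.mp (hC2 ho.1) with h | h
        · exact absurd h ho.2
        · exact h
      · rw [Nat.min_eq_left (by omega)]
        exact hInd_down _ _ (insert_subset ho.1 hC1) hCInd
    have hcd : (C \ S i).card = n - i := by
      rw [card_sdiff_of_subset hC1, hC3, hO'card, hScard i (by omega)]
    calc n - i = (C \ S i).card := hcd.symm
      _ ≤ (A i).card := card_le_card hsub'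
  obtain ⟨g, hg1, hg2⟩ := nested_pick n A hAanti hAcard
  -- g is surjective onto O'
  have hgmem : ∀ i < n, g i ∈ O' := by
    intro i hi
    have := hg1 i hi
    rw [hAdef, mem_filter] at this
    exact this.1
  have himg : (Finset.range n).image g = O' := by
    apply eq_of_subset_of_card_le
    · intro o ho
      obtain ⟨i, hi, rfl⟩ := mem_image.mp ho
      exact hgmem i (mem_range.mp hi)
    · rw [hO'card, card_image_of_injOn, card_range]
      intro i hi j hj heq
      exact hg2 i (mem_range.mp (by exact hi)) j (mem_range.mp (by exact hj)) heq
  -- the key per-element bound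
  have hkey : ∀ i < n, g i ∉ S n →
      f (insert (g i) (S n)) - f (S n) ≤ α * (f (S (i + 1)) - f (S i)) := by
    intro i hi hgS
    have hAi := hg1 i hi
    rw [hAdef, mem_filter, Nat.min_eq_left (by omega : i ≤ n)] at hAi
    have hgSi : g i ∉ S i := fun h => hgS (hSsub i n (by omega) le_rfl h)
    have h1 : f (insert (g i) (S n)) - f (S n) ≤ f (insert (g i) (S i)) - f (S i) :=
      marg_mono f hsub (hSsub i n (by omega) le_rfl) hgS
    obtain ⟨e, he, heq, -, horacle⟩ := hstep i hi
    have h2 := horacle (g i) hgSi hAi.2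
    rw [← heq] at h2
    linarith
  -- main computation
  set D : Finset E := O' \ S n with hDdef
  have hDsub : O' ⊆ S n ∪ D := by
    intro o ho
    rw [mem_union, hDdef, mem_sdiff]
    by_cases h : o ∈ S n
    · exact Or.inl h
    · exact Or.inr ⟨ho, h⟩
  have hdisj : Disjoint (S n) D := disjoint_sdiff
  have h1 : f O' ≤ f (S n ∪ D) := hmono _ _ (hDsub.trans subset_rfl)
  have h2 := sum_marg f hsub (S n) D hdisj
  -- the index set
  set I₀ : Finset ℕ := (Finset.range n).filter (fun i => g i ∈ D) with hI₀def
  have hDimg : D = I₀.image g := by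
    apply Finset.Subset.antisymm
    · intro o ho
      have hoO' : o ∈ O' := (mem_sdiff.mp ho).1
      rw [← himg] at hoO'
      obtain ⟨i, hi, rfl⟩ := mem_image.mp hoO'
      exact mem_image.mpr ⟨i, by rw [hI₀def, mem_filter]; exact ⟨hi, ho⟩, rfl⟩
    · intro o ho
      obtain ⟨i, hi, rfl⟩ := mem_image.mp ho
      rw [hI₀def, mem_filter] at hi
      exact hi.2
  have hinjI : Set.InjOn g I₀ := by
    intro i hi j hj heq
    have hi' := Finset.mem_coe.mp hi
    have hj' := Finset.mem_coe.mp hj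
    rw [hI₀def, mem_filter, mem_range] at hi' hj'
    exact hg2 i hi'.1 j hj'.1 heq
  have h3 : ∑ x ∈ D, (f (insert x (S n)) - f (S n)) =
      ∑ i ∈ I₀, (f (insert (g i) (S n)) - f (S n)) := by
    rw [hDimg, Finset.sum_image]
    intro i hi j hj heq
    exact hinjI (by exact_mod_cast hi) (by exact_mod_cast hj) heq
  have h4 : ∑ i ∈ I₀, (f (insert (g i) (S n)) - f (S n)) ≤
      α * ∑ i ∈ I₀, (f (S (i + 1)) - f (S i)) := by
    rw [Finset.mul_sum]
    apply Finset.sum_le_sum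
    intro i hi
    rw [hI₀def, mem_filter, mem_range] at hi
    exact hkey i hi.1 (mem_sdiff.mp hi.2).2
  have hI₀sub : I₀ ⊆ Finset.range n := by
    rw [hI₀def]; exact filter_subset _ _
  have h5 : ∑ i ∈ I₀, (f (S (i + 1)) - f (S i)) ≤
      ∑ i ∈ Finset.range n, (f (S (i + 1)) - f (S i)) := by
    apply Finset.sum_le_sum_of_subset_of_nonneg hI₀sub
    intro i hi _
    exact hgain i (mem_range.mp hi)
  have h6 : ∑ i ∈ Finset.range n, (f (S (i + 1)) - f (S i)) = f (S n) - f (S 0) :=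
    Finset.sum_range_sub (fun i => f (S i)) n
  have hαpos : (0:ℝ) < α := by linarith
  have hfinal : f O ≤ (α + 1) * f (S n) := by
    have hS0' : f (S 0) = 0 := by rw [hS0, hempty]
    have := mul_le_mul_of_nonneg_left h5 (le_of_lt hαpos)
    rw [h6, hS0'] at this
    linarith
  rw [ge_iff_le, div_le_iff₀ hα1]
  linarith
end

section
/- For maximizing a monotone submodular function f under a cardinality constraint |S| ≤ k, a greedy procedure whose each step achieves at least 1/α of the maximum marginal gain attains f(S_k) ≥ (1 − (1 − 1/(αk))^k)·OPT ≥ (1 − e^{−1/α})·OPT, where OPT = f(S*) is the optimal value. -/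
open Finset

private lemma marginal_sum_bound {E : Type*} [DecidableEq E]
    (f : Finset E → ℝ)
    (hmono : ∀ A B : Finset E, A ⊆ B → f A ≤ f B)
    (hsub : ∀ A B : Finset E, f A + f B ≥ f (A ∪ B) + f (A ∩ B))
    (T : Finset E) :
    ∀ A : Finset E, f (T ∪ A) - f T ≤ ∑ e ∈ A, (f (insert e T) - f T) := by
  intro A
  induction A using Finset.induction_on with
  | empty => simp
  | @insert a A ha ih =>
    rw [Finset.sum_insert ha]
    have h1 : f (T ∪ insert a A) + f T ≤ f (insert a T) + f (T ∪ A) := by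
      have hs := hsub (insert a T) (T ∪ A)
      have hU : insert a T ∪ (T ∪ A) = T ∪ insert a A := by
        ext x
        simp only [Finset.mem_insert, Finset.mem_union]
        tauto
      rw [hU] at hs
      have hm : f T ≤ f (insert a T ∩ (T ∪ A)) := by
        apply hmono
        intro x hx
        simp [Finset.mem_inter, hx]
      linarith
    linarith

/-- α-approximate greedy for monotone submodular maximization under a
cardinality constraint `|S| ≤ k` achieves
`f(S_k) ≥ (1 − (1 − 1/(αk))^k)·OPT ≥ (1 − e^{−1/α})·OPT`. -/
theorem greedy_cardinality_alpha_approx {E : Type*} [Fintype E] [DecidableEq E]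
    (f : Finset E → ℝ)
    (hmono : ∀ A B : Finset E, A ⊆ B → f A ≤ f B)
    (hsub : ∀ A B : Finset E, f A + f B ≥ f (A ∪ B) + f (A ∩ B))
    (hempty : f ∅ = 0)
    (hnonneg : ∀ A : Finset E, 0 ≤ f A)
    (α : ℝ) (hα : 1 ≤ α)
    (k : ℕ) (hk : 0 < k)
    (OPT : ℝ)
    (hOPT_ub : ∀ A : Finset E, A.card ≤ k → f A ≤ OPT)
    (hOPT_mem : ∃ A : Finset E, A.card ≤ k ∧ f A = OPT)
    (S : ℕ → Finset E)
    (hS0 : S 0 = ∅)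
    -- greedy: at each of the `k` steps, add an element whose marginal gain is
    -- at least `1/α` of the best single-element marginal gain
    (hstep : ∀ i < k, ∃ e : E,
      S (i + 1) = insert e (S i) ∧
      ∀ e' : E, α * (f (insert e (S i)) - f (S i)) ≥ f (insert e' (S i)) - f (S i)) :
    f (S k) ≥ (1 - (1 - 1 / (α * k)) ^ k) * OPT ∧
    (1 - (1 - 1 / (α * k)) ^ k) * OPT ≥ (1 - Real.exp (-1 / α)) * OPT := by
  have hα0 : (0:ℝ) < α := lt_of_lt_of_le one_pos hα
  have hk0 : (0:ℝ) < (k:ℝ) := by exact_mod_cast hk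
  have hαk1 : (1:ℝ) ≤ α * k := by
    calc (1:ℝ) = 1 * 1 := by ring
    _ ≤ α * k := by
      apply mul_le_mul hα (by exact_mod_cast hk) zero_le_one (le_of_lt hα0)
  have hαk0 : (0:ℝ) < α * k := lt_of_lt_of_le one_pos hαk1
  set r : ℝ := 1 - 1 / (α * k) with hr
  have hr0 : 0 ≤ r := by
    rw [hr]
    have : 1 / (α * k) ≤ 1 := by
      rw [div_le_one hαk0]; exact hαk1
    linarith
  obtain ⟨A, hAcard, hAopt⟩ := hOPT_mem
  have hOPT0 : 0 ≤ OPT := hAopt ▸ hnonneg A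
  -- per-step recurrence
  have hrec : ∀ i < k, OPT - f (S (i+1)) ≤ r * (OPT - f (S i)) := by
    intro i hi
    obtain ⟨e, hSe, hbest⟩ := hstep i hi
    set Δ : ℝ := f (S (i+1)) - f (S i) with hΔ
    have hΔ0 : 0 ≤ Δ := by
      rw [hΔ, hSe]
      have := hmono (S i) (insert e (S i)) (Finset.subset_insert e (S i))
      linarith
    have key : OPT - f (S i) ≤ (α * k) * Δ := by
      have h1 : OPT ≤ f (S i ∪ A) := by
        rw [← hAopt]; exact hmono A _ Finset.subset_union_right
      have h2 : f (S i ∪ A) - f (S i) ≤ ∑ e' ∈ A, (f (insert e' (S i)) - f (S i)) :=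
        marginal_sum_bound f hmono hsub (S i) A
      have h3 : ∑ e' ∈ A, (f (insert e' (S i)) - f (S i)) ≤ ∑ _e' ∈ A, α * Δ := by
        apply Finset.sum_le_sum
        intro e' _
        have := hbest e'
        rw [hΔ, hSe]
        linarith [hbest e']
      have h4 : ∑ _e' ∈ A, α * Δ = (A.card : ℝ) * (α * Δ) := by
        rw [Finset.sum_const, nsmul_eq_mul]
      have h5 : (A.card : ℝ) * (α * Δ) ≤ (k : ℝ) * (α * Δ) := by
        apply mul_le_mul_of_nonneg_right _ (mul_nonneg (le_of_lt hα0) hΔ0)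
        exact_mod_cast hAcard
      calc OPT - f (S i) ≤ f (S i ∪ A) - f (S i) := by linarith
        _ ≤ (k : ℝ) * (α * Δ) := by linarith
        _ = (α * k) * Δ := by ring
    -- OPT - f(S(i+1)) = (OPT - f(S i)) - Δ ≤ (1 - 1/(αk))(OPT - f(S i))
    have : (OPT - f (S i)) / (α * k) ≤ Δ := (div_le_iff₀ hαk0).mpr (by linarith)
    have expand : r * (OPT - f (S i)) = (OPT - f (S i)) - (OPT - f (S i)) / (α * k) := by
      field_simp [hr]
      rw [hr]
      field_simp
    rw [expand]
    have : f (S (i+1)) = f (S i) + Δ := by rw [hΔ]; ring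
    linarith
  -- induction
  have hind : ∀ i ≤ k, OPT - f (S i) ≤ r ^ i * OPT := by
    intro i
    induction i with
    | zero => intro _; simp [hS0, hempty]
    | succ n ih =>
      intro hn
      have hnk : n < k := Nat.lt_of_succ_le hn
      have h1 := hrec n hnk
      have h2 := ih (le_of_lt hnk)
      calc OPT - f (S (n+1)) ≤ r * (OPT - f (S n)) := h1
        _ ≤ r * (r ^ n * OPT) := mul_le_mul_of_nonneg_left h2 hr0
        _ = r ^ (n+1) * OPT := by ring
  have main : f (S k) ≥ (1 - r ^ k) * OPT := by
    have := hind k le_rfl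
    nlinarith
  refine ⟨main, ?_⟩
  -- (1-1/(αk))^k ≤ exp(-1/α)
  have h1 : r ≤ Real.exp (-(1 / (α * k))) := by
    have := Real.add_one_le_exp (-(1 / (α * k)))
    linarith
  have h2 : r ^ k ≤ Real.exp (-(1 / (α * k))) ^ k := pow_le_pow_left₀ hr0 h1 k
  have h3 : Real.exp (-(1 / (α * k))) ^ k = Real.exp (-1 / α) := by
    rw [← Real.exp_nat_mul]
    congr 1
    field_simp
  have : r ^ k ≤ Real.exp (-1 / α) := h3 ▸ h2
  nlinarith
end

section
/- A sum over a partition respects sequential greedy analysis: if f is monotone submodular with f(∅)=0 and sets A_1, ..., A_m are chosen sequentially such that f(A_1 ∪ ... ∪ A_j) − f(A_1 ∪ ... ∪ A_{j−1}) ≥ β·(f(A_1 ∪ ... ∪ A_{j−1} ∪ O_j) − f(A_1 ∪ ... ∪ A_{j−1})) for each j, where O_1,...,O_m are the blocks of an optimal solution, then f(A_1 ∪ ... ∪ A_m) ≥ (β/(1+β))·f(O_1 ∪ ... ∪ O_m). -/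
open Finset

lemma marg_lemma {E : Type*} [DecidableEq E] (f : Finset E → ℝ)
    (hmono : ∀ A B : Finset E, A ⊆ B → f A ≤ f B)
    (hsub : ∀ A B : Finset E, f A + f B ≥ f (A ∪ B) + f (A ∩ B))
    {S T : Finset E} (X : Finset E) (hST : S ⊆ T) :
    f (T ∪ X) - f T ≤ f (S ∪ X) - f S := by
  have h1 := hsub (S ∪ X) T
  have h2 : f S ≤ f ((S ∪ X) ∩ T) := by
    apply hmono
    intro e he
    exact Finset.mem_inter.mpr ⟨Finset.mem_union_left _ he, hST he⟩
  have h3 : f ((S ∪ X) ∪ T) = f (T ∪ X) := by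
    congr 1
    ext e
    simp only [Finset.mem_union]
    tauto
  linarith [h1, h2, h3.ge, h3.le]

/-- Sequential greedy assignment guarantee: if blocks `A_1, …, A_m` are chosen
sequentially so that each block's gain is at least `β` times the gain of the
corresponding optimal block `O_j` given the prefix, then
`f(A_1 ∪ ⋯ ∪ A_m) ≥ (β/(1+β))·f(O_1 ∪ ⋯ ∪ O_m)`. -/
theorem sequential_greedy_assignment {E : Type*} [Fintype E] [DecidableEq E]
    (f : Finset E → ℝ)
    (hmono : ∀ A B : Finset E, A ⊆ B → f A ≤ f B)
    (hsub : ∀ A B : Finset E, f A + f B ≥ f (A ∪ B) + f (A ∩ B))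
    (hempty : f ∅ = 0)
    (hnonneg : ∀ A : Finset E, 0 ≤ f A)
    (β : ℝ) (hβ0 : 0 < β) (hβ1 : β ≤ 1)
    (m : ℕ) (part : E → ℕ)                 -- the partition `E = E_1 ⊔ ⋯ ⊔ E_m`
    (A O : ℕ → Finset E)
    (hApart : ∀ j, ∀ e ∈ A j, part e = j)  -- `A_j` lies in block `E_j`
    (hOpart : ∀ j, ∀ e ∈ O j, part e = j)  -- `O_j` lies in block `E_j`
    (hstep : ∀ j < m,
      f ((Finset.range (j + 1)).biUnion A) - f ((Finset.range j).biUnion A) ≥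
        β * (f ((Finset.range j).biUnion A ∪ O j) - f ((Finset.range j).biUnion A))) :
    f ((Finset.range m).biUnion A) ≥ (β / (1 + β)) * f ((Finset.range m).biUnion O) := by
  set P : ℕ → Finset E := fun j => (Finset.range j).biUnion A with hP
  set Q : ℕ → Finset E := fun j => (Finset.range j).biUnion O with hQ
  have hPsub : ∀ i j : ℕ, i ≤ j → P i ⊆ P j := by
    intro i j hij
    apply Finset.biUnion_subset_biUnion_of_subset_left
    exact Finset.range_subset_range.mpr hij
  -- key inequality by induction
  have key : ∀ j ≤ m, f (P m ∪ Q j) ≤ f (P m) + ∑ i ∈ Finset.range j, (f (P i ∪ O i) - f (P i)) := by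
    intro j hj
    induction j with
    | zero => simp [hQ]
    | succ k ih =>
      have hk : k ≤ m := Nat.le_of_succ_le hj
      have ihk := ih hk
      have hQsucc : Q (k + 1) = Q k ∪ O k := by
        simp [hQ, Finset.range_add_one, Finset.biUnion_insert, Finset.union_comm]
      have hPk : P k ⊆ P m ∪ Q k := (hPsub k m hk).trans Finset.subset_union_left
      have hm := marg_lemma f hmono hsub (O k) hPk
      have hsum : ∑ i ∈ Finset.range (k + 1), (f (P i ∪ O i) - f (P i)) =
          (∑ i ∈ Finset.range k, (f (P i ∪ O i) - f (P i))) + (f (P k ∪ O k) - f (P k)) :=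
        Finset.sum_range_succ _ _
      have : P m ∪ Q (k + 1) = (P m ∪ Q k) ∪ O k := by
        rw [hQsucc, Finset.union_assoc]
      rw [this, hsum]
      linarith
  have keym := key m le_rfl
  -- telescoping
  have tele : ∑ i ∈ Finset.range m, (f (P (i + 1)) - f (P i)) = f (P m) - f (P 0) :=
    Finset.sum_range_sub (fun i => f (P i)) m
  have hP0 : f (P 0) = 0 := by simp [hP, hempty]
  have sum_ge : ∑ i ∈ Finset.range m, (f (P (i + 1)) - f (P i)) ≥
      β * ∑ i ∈ Finset.range m, (f (P i ∪ O i) - f (P i)) := by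
    rw [Finset.mul_sum]
    apply Finset.sum_le_sum
    intro i hi
    exact hstep i (Finset.mem_range.mp hi)
  have hQm : f (Q m) ≤ f (P m ∪ Q m) := hmono _ _ Finset.subset_union_right
  have hsum_lb : f (Q m) - f (P m) ≤ ∑ i ∈ Finset.range m, (f (P i ∪ O i) - f (P i)) := by
    linarith
  have hfin : f (P m) ≥ β * (f (Q m) - f (P m)) := by
    have hβpos : (0:ℝ) ≤ β := le_of_lt hβ0
    have := mul_le_mul_of_nonneg_left hsum_lb hβpos
    linarith
  rw [ge_iff_le, div_mul_eq_mul_div, div_le_iff₀ (by linarith : (0:ℝ) < 1 + β)]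
  nlinarith [hnonneg (P m)]
end
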